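/- arXiv:1509.08879 — 2 statements merged into one kernel-verified Lean document; each statement's English description precedes it below -/
import Mathlib

section
/- Let ℓ ≥ 1 and N > 2ℓ+2, with periodic boundary conditions or special boundary conditions s = (c₁, c_N), and Ñ = N − (ℓ+2). If ψ' ∈ V_Ñ and φ ∈ V_N satisfy G ψ' = Q₁ φ, then ψ' = 0 (and hence Q₁ φ = 0). -/
attribute [local instance 10] Classical.propDecidable

noncomputable section

/-- A configuration of `N` sites: `true` = occupied, `false` = empty. -/
abbrev Config (N : ℕ) := Fin N → Bool

/-- Extension of a configuration to all of `ℕ`, by empty sites outside the chain. -/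
def extc {N : ℕ} (σ : Config N) (t : ℕ) : Bool :=
  if h : t < N then σ ⟨t, h⟩ else false

/-- The fermion number: the number of occupied sites. -/
def fermions {N : ℕ} (σ : Config N) : ℕ :=
  (Finset.univ.filter fun i => σ i = true).card

/-- Allowed configurations of the open chain of `N` sites with exclusion parameter `ℓ`
and special boundary conditions `(c₁, cN)`: no cluster is longer than `ℓ`, the cluster
containing the first site (if occupied) has length at most `c₁`, and the cluster
containing the last site (if occupied) has length at most `cN`. -/
def OpenOK (N ℓ c₁ cN : ℕ) (σ : Config N) : Prop :=
  (∀ a : ℕ, ¬ ∀ k ≤ ℓ, extc σ (a + k) = true) ∧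
  (¬ (c₁ + 1 ≤ N ∧ ∀ k ≤ c₁, extc σ k = true)) ∧
  (¬ (cN + 1 ≤ N ∧ ∀ k ≤ cN, extc σ (N - 1 - k) = true))

/-- Cyclic shift of a site of the closed chain by `k` steps. -/
def cyc {N : ℕ} (i : Fin N) (k : ℕ) : Fin N :=
  ⟨(i.1 + k) % N, Nat.mod_lt _ i.pos⟩

/-- Allowed configurations of the closed chain of `N` sites with periodic boundary
conditions: the chain is not fully occupied and no maximal cyclic run of occupied
sites is longer than `ℓ`. -/
def PerOK (N ℓ : ℕ) (σ : Config N) : Prop :=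
  ∀ i : Fin N, ∃ k ≤ ℓ, σ (cyc i k) = false

/-- The fermionic sign `(-1)^{#{j < i : σ j = 1}}`. -/
def sgn {N : ℕ} (σ : Config N) (i : Fin N) : ℂ :=
  (-1 : ℂ) ^ ((Finset.univ.filter fun j => j < i ∧ σ j = true).card)

/-- The Hilbert space `V_N`: complex functions on allowed configurations. -/
abbrev AState (N : ℕ) (OK : Config N → Prop) := {σ : Config N // OK σ} → ℂ

/-- Matrix of the supercharge with amplitudes `A`, with particle insertion
restricted to the sublattice `S`: the entry `(τ, σ)` is the amplitude (with fermionic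
sign) for obtaining `τ` from `σ` by occupying an empty site of `S`. -/
def QmatA (N : ℕ) (OK : Config N → Prop) (S : Fin N → Prop)
    (A : Config N → Fin N → ℂ) :
    Matrix {σ : Config N // OK σ} {σ : Config N // OK σ} ℂ := fun τ σ =>
  ∑ i : Fin N,
    if S i ∧ σ.1 i = false ∧ τ.1 = Function.update σ.1 i true
    then A σ.1 i * sgn σ.1 i else 0

/-- The supercharge with amplitudes `A` restricted to the sublattice `S`, as a linear map. -/
def QopA (N : ℕ) (OK : Config N → Prop) (S : Fin N → Prop)
    (A : Config N → Fin N → ℂ) : AState N OK →ₗ[ℂ] AState N OK :=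
  (QmatA N OK S A).mulVecLin

/-- The unit-coupling supercharge restricted to the sublattice `S`. -/
def Qop (N : ℕ) (OK : Config N → Prop) (S : Fin N → Prop) :
    AState N OK →ₗ[ℂ] AState N OK :=
  QopA N OK S fun _ _ => 1

/-- The subspace `V_{N,f}` of states supported on configurations with fermion number `f`. -/
def gradeV (N : ℕ) (OK : Config N → Prop) (f : ℕ) :
    Submodule ℂ (AState N OK) where
  carrier := {ψ | ∀ σ, fermions σ.1 ≠ f → ψ σ = 0}
  add_mem' := by
    intro a b ha hb σ h
    show a σ + b σ = 0
    rw [ha σ h, hb σ h, add_zero]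
  zero_mem' := by intro σ h; rfl
  smul_mem' := by
    intro c a ha σ h
    show c * a σ = 0
    rw [ha σ h, mul_zero]

/-- The first sublattice `S₁ = {1, …, ℓ+2}` (the first `ℓ+2` sites). -/
def S1 (N ℓ : ℕ) : Fin N → Prop := fun i => i.1 < ℓ + 2

/-- The second sublattice `S₂ = {ℓ+3, …, N}` (the remaining sites). -/
def S2 (N ℓ : ℕ) : Fin N → Prop := fun i => ℓ + 2 ≤ i.1

/-- The configuration `χ σ'`: the `(ℓ+2)`-site configuration `χ = 0 1…1 0`
followed by the `Ñ`-site configuration `σ'`. -/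
def glue (ℓ Nt : ℕ) (σ : Config Nt) : Config (Nt + (ℓ + 2)) := fun i =>
  if h : i.1 < ℓ + 2 then decide (1 ≤ i.1 ∧ i.1 ≤ ℓ)
  else σ ⟨i.1 - (ℓ + 2), by have h2 := i.isLt; omega⟩

/-- Matrix of the map `G : V_Ñ → V_N`, `e_{σ'} ↦ e_{χ σ'}`. -/
def Gmat (ℓ Nt : ℕ) (OKN : Config (Nt + (ℓ + 2)) → Prop) (OKt : Config Nt → Prop) :
    Matrix {σ : Config (Nt + (ℓ + 2)) // OKN σ} {σ : Config Nt // OKt σ} ℂ :=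
  fun τ σ => if τ.1 = glue ℓ Nt σ.1 then 1 else 0

/-- The linear map `G : V_Ñ → V_N` sending `e_{σ'}` to `e_{χ σ'}`. -/
def Gop (ℓ Nt : ℕ) (OKN : Config (Nt + (ℓ + 2)) → Prop) (OKt : Config Nt → Prop) :
    AState Nt OKt →ₗ[ℂ] AState (Nt + (ℓ + 2)) OKN :=
  (Gmat ℓ Nt OKN OKt).mulVecLin

/-! For each allowed tail `T`, look at the configurations whose first `ℓ + 2` sites are occupied
except for two holes `a < b`, followed by `T`. There is a threshold `b₁ ≤ ℓ` (`c₁` for special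
boundary conditions, `ℓ` minus the length of the final occupied run of `T` for periodic ones)
such that all of them with `a ≤ b₁ < b` are allowed. Pairing a state with these configurations,
weighted by `(-1)^(a+b)`, annihilates the image of `Q₁`: the contributions to it come in pairs
of opposite sign, labelled by the three holes of the configuration `Q₁` acts on. On `G ψ'` the
same pairing only sees the pair `(0, ℓ + 1)`, which forms `χ`, and gives `(-1)^(ℓ+1) ψ'(T)`.
Hence `G ψ' = Q₁ φ` forces `ψ'(T) = 0`. -/

open Finset

lemma card_filter_pair_lt {a b : ℕ} (hab : a ≠ b) (i : ℕ) :
    #(({a, b} : Finset ℕ).filter (· < i)) =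
      (if a < i then 1 else 0) + (if b < i then 1 else 0) := by
  rw [filter_insert, filter_singleton]
  split_ifs <;> simp [*]

/-- The pair weight `(-1)^(a+b)` times the fermionic sign of occupying the site `i` of a head
with holes `{a, b, i}`. -/
def tripleSign (a b i : ℕ) : ℂ :=
  (-1) ^ (a + b) * (-1) ^ (i + #(({a, b} : Finset ℕ).filter (· < i)))

lemma tripleSign_swap_left {a b i : ℕ} (hai : a ≠ i) (ha : a < b) (hi : i < b) :
    tripleSign i b a = -tripleSign a b i := by
  unfold tripleSign
  rw [card_filter_pair_lt (by omega), card_filter_pair_lt (by omega)]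
  rcases Nat.lt_or_gt_of_ne hai with h | h <;>
    simp [h, h.not_gt, hi.not_gt, ha.not_gt, pow_succ, pow_add] <;> ring

lemma tripleSign_swap_right {a b i : ℕ} (hbi : b ≠ i) (ha : a < b) (hi : a < i) :
    tripleSign a i b = -tripleSign a b i := by
  unfold tripleSign
  rw [card_filter_pair_lt (by omega), card_filter_pair_lt (by omega)]
  rcases Nat.lt_or_gt_of_ne hbi with h | h <;>
    simp [h, h.not_gt, hi, ha, pow_succ, pow_add] <;> ring

def tripleTerm (P : Finset ℕ → Prop) (a b i : ℕ) : ℂ :=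
  if i ≠ a ∧ i ≠ b ∧ P (insert i {a, b}) then tripleSign a b i else 0

lemma tripleTerm_swap_left (P : Finset ℕ → Prop) {a b i : ℕ} (ha : a < b) (hi : i < b) :
    tripleTerm P i b a = -tripleTerm P a b i := by
  by_cases hia : i = a
  · subst hia; simp [tripleTerm]
  have hcond : (a ≠ i ∧ a ≠ b ∧ P (insert a {i, b})) ↔ (i ≠ a ∧ i ≠ b ∧ P (insert i {a, b})) := by
    rw [insert_comm]
    exact ⟨fun h => ⟨by omega, by omega, h.2.2⟩, fun h => ⟨by omega, by omega, h.2.2⟩⟩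
  rw [tripleTerm, tripleTerm, if_congr hcond rfl rfl, tripleSign_swap_left (Ne.symm hia) ha hi]
  split_ifs <;> simp

lemma tripleTerm_swap_right (P : Finset ℕ → Prop) {a b i : ℕ} (ha : a < b) (hi : a < i) :
    tripleTerm P a i b = -tripleTerm P a b i := by
  by_cases hbi : b = i
  · subst hbi; simp [tripleTerm]
  have hcond : (b ≠ a ∧ b ≠ i ∧ P (insert b {a, i})) ↔ (i ≠ a ∧ i ≠ b ∧ P (insert i {a, b})) := by
    rw [insert_comm, pair_comm, insert_comm, pair_comm]
    exact ⟨fun h => ⟨by omega, by omega, h.2.2⟩, fun h => ⟨by omega, by omega, h.2.2⟩⟩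
  rw [tripleTerm, tripleTerm, if_congr hcond rfl rfl, tripleSign_swap_right hbi ha hi]
  split_ifs <;> simp

/-- The sign-reversing involution trades `i` for whichever of `a ≤ b₁ < b` lies on its side
of `b₁`. -/
lemma sum_tripleTerm_eq_zero (P : Finset ℕ → Prop) (b₁ n : ℕ) :
    ∑ p ∈ range (b₁ + 1) ×ˢ Ioo b₁ n, ∑ i ∈ range n, tripleTerm P p.1 p.2 i = 0 := by
  rw [← sum_product' _ _ fun (p : ℕ × ℕ) i => tripleTerm P p.1 p.2 i]
  refine sum_involution
    (fun t _ => if t.2 ≤ b₁ then ((t.2, t.1.2), t.1.1) else ((t.1.1, t.2), t.1.2)) ?_ ?_ ?_ ?_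
  all_goals rintro ⟨⟨a, b⟩, i⟩ ht
  all_goals simp only [mem_product, mem_range, mem_Ioo] at ht
  all_goals dsimp only
  · split_ifs with hi
    · rw [tripleTerm_swap_left P (a := a) (b := b) (i := i) (by omega) (by omega), add_neg_cancel]
    · rw [tripleTerm_swap_right P (a := a) (b := b) (i := i) (by omega) (by omega),
        add_neg_cancel]
  · intro hne
    split_ifs with hi <;> simp only [ne_eq, Prod.mk.injEq] <;> rintro ⟨⟨h₁, h₂⟩, -⟩ <;>
      simp [tripleTerm, h₁, h₂] at hne
  · split_ifs with hi <;> simp only [mem_product, mem_range, mem_Ioo] <;> omega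
  · split_ifs <;> dsimp only at * <;> simp only [Prod.mk.injEq] <;> omega

def withHoles (ℓ : ℕ) {Nt : ℕ} (E : Finset ℕ) (T : Config Nt) : Config (Nt + (ℓ + 2)) :=
  fun i => if h : i.1 < ℓ + 2 then decide (i.1 ∉ E) else T ⟨i.1 - (ℓ + 2), by have := i.isLt; omega⟩

section withHoles

variable {ℓ Nt : ℕ} {E : Finset ℕ} {T : Config Nt}

lemma extc_withHoles_of_lt {t : ℕ} (ht : t < ℓ + 2) :
    extc (withHoles ℓ E T) t = decide (t ∉ E) := by
  simp [extc, withHoles, ht, show t < Nt + (ℓ + 2) by omega]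

lemma extc_withHoles_add (u : ℕ) : extc (withHoles ℓ E T) (ℓ + 2 + u) = extc T u := by
  by_cases hu : u < Nt
  · simp [extc, withHoles, hu, show ℓ + 2 + u < Nt + (ℓ + 2) by omega]
  · simp [extc, hu, show ¬ ℓ + 2 + u < Nt + (ℓ + 2) by omega]

lemma extc_withHoles_of_mem {t : ℕ} (ht : t < ℓ + 2) (hE : t ∈ E) :
    extc (withHoles ℓ E T) t = false := by
  simp [extc_withHoles_of_lt ht, hE]

lemma withHoles_inj {E' : Finset ℕ} {T' : Config Nt} (h : withHoles ℓ E T = withHoles ℓ E' T') :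
    T = T' ∧ ∀ t < ℓ + 2, (t ∈ E ↔ t ∈ E') := by
  refine ⟨funext fun u => ?_, fun t ht => ?_⟩
  · have hu := congrArg (extc · (ℓ + 2 + u.1)) h
    simp only [extc_withHoles_add] at hu
    simpa [extc, u.isLt] using hu
  · simpa [extc_withHoles_of_lt ht] using congrArg (extc · t) h

lemma glue_eq_withHoles (T : Config Nt) : glue ℓ Nt T = withHoles ℓ {0, ℓ + 1} T := by
  funext i
  by_cases hi : i.1 < ℓ + 2
  · simp only [glue, withHoles, hi, dif_pos, mem_insert, mem_singleton]
    exact decide_eq_decide.2 (by omega)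
  · simp [glue, withHoles, hi]

lemma glue_injective : Function.Injective (glue ℓ Nt) := fun _ _ h => by
  rw [glue_eq_withHoles, glue_eq_withHoles] at h
  exact (withHoles_inj h).1

lemma update_withHoles_true {i : Fin (Nt + (ℓ + 2))} (hi : i.1 < ℓ + 2) :
    Function.update (withHoles ℓ E T) i true = withHoles ℓ (E.erase i.1) T := by
  funext j
  rcases eq_or_ne j i with rfl | hji
  · simp [withHoles, hi]
  · have : j.1 ≠ i.1 := Fin.val_ne_of_ne hji
    simp [Function.update_of_ne hji, withHoles, this]

lemma update_withHoles_false {i : Fin (Nt + (ℓ + 2))} (hi : i.1 < ℓ + 2) :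
    Function.update (withHoles ℓ E T) i false = withHoles ℓ (insert i.1 E) T := by
  funext j
  rcases eq_or_ne j i with rfl | hji
  · simp [withHoles, hi]
  · have : j.1 ≠ i.1 := Fin.val_ne_of_ne hji
    simp [Function.update_of_ne hji, withHoles, this]

lemma update_eq_withHoles_iff {σ : Config (Nt + (ℓ + 2))} {i : Fin (Nt + (ℓ + 2))}
    (hi : i.1 < ℓ + 2) :
    σ i = false ∧ withHoles ℓ E T = Function.update σ i true ↔
      i.1 ∉ E ∧ σ = withHoles ℓ (insert i.1 E) T := by
  constructor
  · rintro ⟨hσi, hupd⟩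
    have hiE : i.1 ∉ E := by
      simpa [withHoles, hi] using congrFun hupd i
    refine ⟨hiE, ?_⟩
    rw [← update_withHoles_false hi, hupd, Function.update_idem, ← hσi, Function.update_eq_self]
  · rintro ⟨hiE, rfl⟩
    refine ⟨by simp [withHoles, hi], ?_⟩
    rw [update_withHoles_true hi, erase_insert hiE]

end withHoles

lemma card_filter_lt_eq_card_filter_range {N : ℕ} (σ : Config N) (i : Fin N) :
    #{j | j < i ∧ σ j = true} = #((range i).filter fun t => extc σ t = true) := by
  rw [← card_map Fin.valEmbedding]
  congr 1
  ext t
  simp only [mem_map, mem_filter, mem_univ, true_and, Fin.valEmbedding_apply, mem_range]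
  constructor
  · rintro ⟨j, ⟨hj, hσ⟩, rfl⟩
    exact ⟨hj, by simp [extc, j.isLt, hσ]⟩
  · rintro ⟨ht, hσ⟩
    have htN : t < N := ht.trans i.isLt
    exact ⟨⟨t, htN⟩, ⟨ht, by simpa [extc, htN] using hσ⟩, rfl⟩

lemma sgn_withHoles {ℓ Nt : ℕ} (E : Finset ℕ) (T : Config Nt) {i : Fin (Nt + (ℓ + 2))}
    (hi : i.1 < ℓ + 2) :
    sgn (withHoles ℓ E T) i = (-1) ^ (i.1 + #(E.filter (· < i.1))) := by
  have hocc : (range i.1).filter (fun t => extc (withHoles ℓ E T) t = true) =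
      (range i.1).filter (· ∉ E) :=
    filter_congr fun t ht => by simp [extc_withHoles_of_lt ((mem_range.1 ht).trans hi)]
  have hholes : (range i.1).filter (· ∈ E) = E.filter (· < i.1) := by
    ext t; simp [and_comm]
  have hcount := card_filter_add_card_filter_not (s := range i.1) (· ∈ E)
  rw [hholes, card_range] at hcount
  rw [sgn, card_filter_lt_eq_card_filter_range, hocc]
  generalize #((range i.1).filter (· ∉ E)) = m at hcount ⊢
  generalize #(E.filter (· < i.1)) = k at hcount ⊢
  rw [← hcount, show k + m + k = m + 2 * k by ring, pow_add, pow_mul, neg_one_sq, one_pow,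
    mul_one]

lemma Qop_apply {N : ℕ} (OK : Config N → Prop) (S : Fin N → Prop) (φ : AState N OK)
    (τ : {σ : Config N // OK σ}) :
    Qop N OK S φ τ = ∑ σ, (∑ i, if S i ∧ σ.1 i = false ∧ τ.1 = Function.update σ.1 i true
      then sgn σ.1 i else 0) * φ σ := by
  simp [Qop, QopA, Matrix.mulVec, dotProduct, QmatA]

lemma Gop_apply {ℓ Nt : ℕ} (OKN : Config (Nt + (ℓ + 2)) → Prop) (OKt : Config Nt → Prop)
    (ψ' : AState Nt OKt) (τ : {σ : Config (Nt + (ℓ + 2)) // OKN σ}) :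
    Gop ℓ Nt OKN OKt ψ' τ = ∑ σ', if τ.1 = glue ℓ Nt σ'.1 then ψ' σ' else 0 := by
  simp [Gop, Matrix.mulVec, dotProduct, Gmat]

lemma neg_one_pow_mul_Q1_entry_eq_tripleTerm {ℓ Nt : ℕ} (T : Config Nt)
    (σ : Config (Nt + (ℓ + 2))) (a b : ℕ) (i : Fin (Nt + (ℓ + 2))) :
    (-1) ^ (a + b) * (if S1 (Nt + (ℓ + 2)) ℓ i ∧ σ i = false ∧
        withHoles ℓ {a, b} T = Function.update σ i true then sgn σ i else 0) =
      if i.1 < ℓ + 2 then tripleTerm (fun E => σ = withHoles ℓ E T) a b i.1 else 0 := by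
  by_cases hi : i.1 < ℓ + 2
  · have hcond : (S1 (Nt + (ℓ + 2)) ℓ i ∧ σ i = false ∧
        withHoles ℓ {a, b} T = Function.update σ i true) ↔
        (i.1 ≠ a ∧ i.1 ≠ b ∧ σ = withHoles ℓ (insert i.1 {a, b}) T) := by
      rw [update_eq_withHoles_iff hi]
      simp [S1, hi, and_assoc]
    rw [if_pos hi, tripleTerm, if_congr hcond rfl rfl]
    split_ifs with h
    · rw [h.2.2, sgn_withHoles _ _ hi, filter_insert, if_neg (lt_irrefl _), tripleSign]
    · rw [mul_zero]
  · simp [S1, hi]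

lemma sum_fin_ite_lt {N n : ℕ} (hn : n ≤ N) (g : ℕ → ℂ) :
    ∑ i : Fin N, (if i.1 < n then g i.1 else 0) = ∑ i ∈ range n, g i := by
  rw [Fin.sum_univ_eq_sum_range (fun i => if i < n then g i else 0), ← sum_filter]
  congr 1
  ext i
  simp only [mem_filter, mem_range]
  omega

def extendByZero {N : ℕ} {OK : Config N → Prop} (ψ : AState N OK) (σ : Config N) : ℂ :=
  if h : OK σ then ψ ⟨σ, h⟩ else 0

def holePairing (ℓ : ℕ) {Nt : ℕ} {OK : Config (Nt + (ℓ + 2)) → Prop} (T : Config Nt) (b₁ : ℕ)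
    (ψ : AState (Nt + (ℓ + 2)) OK) : ℂ :=
  ∑ p ∈ range (b₁ + 1) ×ˢ Ioo b₁ (ℓ + 2),
    (-1) ^ (p.1 + p.2) * extendByZero ψ (withHoles ℓ {p.1, p.2} T)

section holePairing

variable {ℓ Nt b₁ : ℕ} {T : Config Nt}

lemma holePairing_Qop {OK : Config (Nt + (ℓ + 2)) → Prop}
    (hOK : ∀ a b, a ≤ b₁ → b₁ < b → b ≤ ℓ + 1 → OK (withHoles ℓ {a, b} T))
    (φ : AState (Nt + (ℓ + 2)) OK) :
    holePairing ℓ T b₁ (Qop (Nt + (ℓ + 2)) OK (S1 (Nt + (ℓ + 2)) ℓ) φ) = 0 := by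
  have hσ : ∀ σ : Config (Nt + (ℓ + 2)), ∑ p ∈ range (b₁ + 1) ×ˢ Ioo b₁ (ℓ + 2), ∑ i,
      (-1) ^ (p.1 + p.2) * (if S1 (Nt + (ℓ + 2)) ℓ i ∧ σ i = false ∧
        withHoles ℓ {p.1, p.2} T = Function.update σ i true then sgn σ i else 0) = 0 := by
    intro σ
    refine (sum_congr rfl fun p _ => ?_).trans
      (sum_tripleTerm_eq_zero (fun E => σ = withHoles ℓ E T) b₁ (ℓ + 2))
    rw [sum_congr rfl fun i _ => neg_one_pow_mul_Q1_entry_eq_tripleTerm T σ p.1 p.2 i]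
    exact sum_fin_ite_lt (by omega) _
  calc holePairing ℓ T b₁ (Qop (Nt + (ℓ + 2)) OK (S1 (Nt + (ℓ + 2)) ℓ) φ)
      = ∑ p ∈ range (b₁ + 1) ×ˢ Ioo b₁ (ℓ + 2), ∑ σ, (∑ i, (-1) ^ (p.1 + p.2) *
          (if S1 (Nt + (ℓ + 2)) ℓ i ∧ σ.1 i = false ∧
            withHoles ℓ {p.1, p.2} T = Function.update σ.1 i true then sgn σ.1 i else 0)) *
          φ σ := by
        refine sum_congr rfl fun p hp => ?_
        simp only [mem_product, mem_range, mem_Ioo] at hp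
        rw [extendByZero, dif_pos (hOK _ _ (by omega) hp.2.1 (by omega)), Qop_apply, mul_sum]
        simp only [mul_sum, ← mul_assoc, sum_mul]
    _ = ∑ σ, (∑ p ∈ range (b₁ + 1) ×ˢ Ioo b₁ (ℓ + 2), ∑ i, (-1) ^ (p.1 + p.2) *
          (if S1 (Nt + (ℓ + 2)) ℓ i ∧ σ.1 i = false ∧
            withHoles ℓ {p.1, p.2} T = Function.update σ.1 i true then sgn σ.1 i else 0)) *
          φ σ := by
        rw [sum_comm]
        simp only [sum_mul]
    _ = 0 := by simp only [hσ, zero_mul, sum_const_zero]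

lemma holePairing_Gop {OKN : Config (Nt + (ℓ + 2)) → Prop} {OKt : Config Nt → Prop}
    (hb₁ : b₁ ≤ ℓ) (hT : OKt T) (hχT : OKN (glue ℓ Nt T)) (ψ' : AState Nt OKt) :
    holePairing ℓ T b₁ (Gop ℓ Nt OKN OKt ψ') = (-1) ^ (ℓ + 1) * ψ' ⟨T, hT⟩ := by
  rw [holePairing, sum_eq_single_of_mem (0, ℓ + 1) (by simp; omega)]
  · rw [zero_add, ← glue_eq_withHoles, extendByZero, dif_pos hχT, Gop_apply,
      sum_eq_single_of_mem ⟨T, hT⟩ (mem_univ _), if_pos rfl]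
    rintro σ' - hσ'
    exact if_neg fun h => hσ' (Subtype.ext (glue_injective h).symm)
  · rintro ⟨a, b⟩ hp hab
    simp only [mem_product, mem_range, mem_Ioo] at hp
    rw [extendByZero]
    split_ifs
    · rw [Gop_apply, sum_eq_zero, mul_zero]
      rintro σ' -
      refine if_neg fun h => hab ?_
      rw [glue_eq_withHoles] at h
      have h0 := ((withHoles_inj h).2 0 (by omega)).2
      have h1 := ((withHoles_inj h).2 (ℓ + 1) (by omega)).2
      simp only [mem_insert, mem_singleton, true_or, or_true, forall_const] at h0 h1
      simp only [Prod.mk.injEq]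
      omega
    · rw [mul_zero]

end holePairing

section allowed

variable {ℓ Nt : ℕ} {T : Config Nt}

lemma exists_hole_of_lt_head {a b r s : ℕ} (hab : a < b) (hb : b ≤ ℓ + 1) (hrb : r < b)
    (hr : extc T r = false) (hs : s < ℓ + 2) :
    ∃ k ≤ ℓ, s + k ≤ ℓ + 2 + r ∧ extc (withHoles ℓ {a, b} T) (s + k) = false := by
  rcases (show s ≤ a ∨ (a < s ∧ s ≤ b) ∨ b < s by omega) with h | h | h
  · refine ⟨a - s, by omega, by omega, ?_⟩
    rw [Nat.add_sub_cancel' h]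
    exact extc_withHoles_of_mem (by omega) (by simp)
  · refine ⟨b - s, by omega, by omega, ?_⟩
    rw [Nat.add_sub_cancel' h.2]
    exact extc_withHoles_of_mem (by omega) (by simp)
  · refine ⟨ℓ + 2 + r - s, by omega, by omega, ?_⟩
    rw [Nat.add_sub_cancel' (by omega), extc_withHoles_add]
    exact hr

lemma openOK_withHoles {c₁ cN a b : ℕ} (hNt : ℓ < Nt) (hc₁ : c₁ ≤ ℓ) (hcN : cN ≤ ℓ)
    (hT : OpenOK Nt ℓ c₁ cN T) (ha : a ≤ c₁) (hb : c₁ < b) (hb' : b ≤ ℓ + 1) :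
    OpenOK (Nt + (ℓ + 2)) ℓ c₁ cN (withHoles ℓ {a, b} T) := by
  obtain ⟨hrun, hfirst, hlast⟩ := hT
  obtain ⟨r, hr, hrT⟩ : ∃ r ≤ c₁, extc T r = false := by
    by_contra! h
    exact hfirst ⟨by omega, fun k hk => by simpa using h k hk⟩
  refine ⟨fun s hs => ?_, fun h => ?_, fun h => ?_⟩
  · by_cases hsl : s < ℓ + 2
    · obtain ⟨k, hk, -, hkσ⟩ :=
        exists_hole_of_lt_head (a := a) (b := b) (by omega) hb' (by omega) hrT hsl
      simp [hs k hk] at hkσ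
    · refine hrun (s - (ℓ + 2)) fun k hk => ?_
      rw [← extc_withHoles_add (ℓ := ℓ) (E := {a, b}), ← hs k hk]
      congr 1
      omega
  · have ha' := h.2 a ha
    rw [extc_withHoles_of_mem (E := {a, b}) (by omega) (by simp)] at ha'
    exact Bool.noConfusion ha'
  · refine hlast ⟨by omega, fun k hk => ?_⟩
    rw [← extc_withHoles_add (ℓ := ℓ) (E := {a, b}), ← h.2 k hk]
    congr 1
    omega

lemma cyc_eq_extc {N : ℕ} (σ : Config N) (i : Fin N) (k : ℕ) :
    σ (cyc i k) = extc σ ((i.1 + k) % N) := by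
  simp [extc, cyc, Nat.mod_lt _ i.pos]

lemma perOK_iff {N : ℕ} (σ : Config N) :
    PerOK N ℓ σ ↔ ∀ s < N, ∃ k ≤ ℓ, extc σ ((s + k) % N) = false := by
  simp only [PerOK, cyc_eq_extc, Fin.forall_iff]

lemma exists_last_hole {p : ℕ} (hp : p < Nt) (hpT : extc T p = false) :
    ∃ q < Nt, extc T q = false ∧ ∀ m, q < m → m < Nt → extc T m = true := by
  obtain ⟨q, hq, hmax⟩ :=
    ((range Nt).filter (extc T · = false)).exists_max_image id ⟨p, by simp [hp, hpT]⟩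
  simp only [mem_filter, mem_range] at hq
  refine ⟨q, hq.1, hq.2, fun m hqm hm => ?_⟩
  by_contra h
  have := hmax m (by simp [hm, h])
  simp only [id] at this
  omega

/-- The occupied run of `T` that wraps around from the last hole `q` ends at a hole `r`, and
has length at most `ℓ`. -/
lemma exists_hole_after_wrap (hNt : 0 < Nt)
    (hT : ∀ s < Nt, ∃ k ≤ ℓ, extc T ((s + k) % Nt) = false) {q : ℕ} (hq : q < Nt)
    (hqmax : ∀ m, q < m → m < Nt → extc T m = true) :
    ∃ r < Nt, extc T r = false ∧ Nt + r ≤ ℓ + q + 1 := by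
  obtain ⟨k, hk, hkT⟩ := hT ((q + 1) % Nt) (Nat.mod_lt _ hNt)
  refine ⟨_, Nat.mod_lt _ hNt, hkT, ?_⟩
  rcases (show q + 1 = Nt ∨ q + 1 < Nt by omega) with hq' | hq'
  · rw [hq', Nat.mod_self, zero_add]
    have := Nat.mod_le k Nt
    omega
  · rw [Nat.mod_eq_of_lt hq'] at hkT ⊢
    have hwrap : Nt ≤ q + 1 + k := by
      by_contra! h
      rw [Nat.mod_eq_of_lt h, hqmax _ (by omega) h] at hkT
      exact Bool.noConfusion hkT
    rw [Nat.mod_eq_sub_mod hwrap]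
    have := Nat.mod_le (q + 1 + k - Nt) Nt
    omega

lemma exists_perOK_withHoles (hNt : 0 < Nt) (hT : PerOK Nt ℓ T) :
    ∃ b₁ ≤ ℓ, ∀ a b, a ≤ b₁ → b₁ < b → b ≤ ℓ + 1 →
      PerOK (Nt + (ℓ + 2)) ℓ (withHoles ℓ {a, b} T) := by
  rw [perOK_iff] at hT
  obtain ⟨k, -, hkT⟩ := hT 0 hNt
  obtain ⟨q, hq, hqT, hqmax⟩ := exists_last_hole (Nat.mod_lt _ hNt) hkT
  obtain ⟨r, hr, hrT, hrq⟩ := exists_hole_after_wrap hNt hT hq hqmax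
  refine ⟨ℓ + q + 1 - Nt, by omega, fun a b ha hb hb' => (perOK_iff _).2 fun s hs => ?_⟩
  by_cases hsl : s < ℓ + 2
  · obtain ⟨k, hk, hk', hkσ⟩ :=
      exists_hole_of_lt_head (a := a) (b := b) (by omega) hb' (by omega) hrT hsl
    exact ⟨k, hk, by rwa [Nat.mod_eq_of_lt (by omega)]⟩
  obtain ⟨j, rfl⟩ : ∃ j, s = ℓ + 2 + j := ⟨s - (ℓ + 2), by omega⟩
  obtain ⟨k, hk, hkT⟩ := hT j (by omega)
  by_cases hjk : j + k < Nt
  · refine ⟨k, hk, ?_⟩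
    rw [Nat.mod_eq_of_lt (by omega), add_assoc, extc_withHoles_add]
    rwa [Nat.mod_eq_of_lt hjk] at hkT
  by_cases hjq : j ≤ q
  · refine ⟨q - j, by omega, ?_⟩
    rw [show ℓ + 2 + j + (q - j) = ℓ + 2 + q by omega, Nat.mod_eq_of_lt (by omega),
      extc_withHoles_add]
    exact hqT
  -- past the last hole of `T` the window wraps around to the hole `a` of the head
  · refine ⟨Nt - j + a, by omega, ?_⟩
    rw [show ℓ + 2 + j + (Nt - j + a) = Nt + (ℓ + 2) + a by omega, Nat.add_mod_left,
      Nat.mod_eq_of_lt (by omega)]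
    exact extc_withHoles_of_mem (by omega) (by simp)

end allowed

theorem G_image_not_Q1_coboundary_general (ℓ Nt : ℕ) (hNt : ℓ < Nt)
    (OKN : Config (Nt + (ℓ + 2)) → Prop) (OKt : Config Nt → Prop)
    (hBC : (OKN = PerOK (Nt + (ℓ + 2)) ℓ ∧ OKt = PerOK Nt ℓ) ∨
      ∃ c₁ cN, c₁ ≤ ℓ ∧ cN ≤ ℓ ∧
        OKN = OpenOK (Nt + (ℓ + 2)) ℓ c₁ cN ∧ OKt = OpenOK Nt ℓ c₁ cN) :
    ∀ (ψ' : AState Nt OKt) (φ : AState (Nt + (ℓ + 2)) OKN),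
      Gop ℓ Nt OKN OKt ψ' = Qop (Nt + (ℓ + 2)) OKN (S1 (Nt + (ℓ + 2)) ℓ) φ →
      ψ' = 0 ∧ Qop (Nt + (ℓ + 2)) OKN (S1 (Nt + (ℓ + 2)) ℓ) φ = 0 := by
  have hthreshold : ∀ T, OKt T → ∃ b₁ ≤ ℓ,
      ∀ a b, a ≤ b₁ → b₁ < b → b ≤ ℓ + 1 → OKN (withHoles ℓ {a, b} T) := by
    rcases hBC with ⟨rfl, rfl⟩ | ⟨c₁, cN, hc₁, hcN, rfl, rfl⟩
    · exact fun T hT => exists_perOK_withHoles (by omega) hT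
    · exact fun T hT => ⟨c₁, hc₁, fun a b => openOK_withHoles hNt hc₁ hcN hT⟩
  intro ψ' φ h
  have hψ' : ψ' = 0 := by
    funext ⟨T, hT⟩
    obtain ⟨b₁, hb₁, hOK⟩ := hthreshold T hT
    have hχT : OKN (glue ℓ Nt T) := by
      rw [glue_eq_withHoles]
      exact hOK 0 (ℓ + 1) (Nat.zero_le _) (by omega) le_rfl
    have key := holePairing_Gop hb₁ hT hχT ψ'
    rw [h, holePairing_Qop hOK] at key
    simpa using key.symm
  exact ⟨hψ', by rw [← h, hψ', map_zero]⟩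

/-- For a chain of `N = Ñ + (ℓ+2) > 2ℓ+2` sites with periodic or special boundary
conditions, the equation `G ψ' = Q₁ φ` has no solutions other than `ψ' = 0`
(and hence `Q₁ φ = 0`). -/
theorem G_image_not_Q1_coboundary (ℓ Nt : ℕ) (hℓ : 1 ≤ ℓ) (hNt : ℓ < Nt)
    (OKN : Config (Nt + (ℓ + 2)) → Prop) (OKt : Config Nt → Prop)
    (hBC : (OKN = PerOK (Nt + (ℓ + 2)) ℓ ∧ OKt = PerOK Nt ℓ) ∨
      ∃ c₁ cN, c₁ ≤ ℓ ∧ cN ≤ ℓ ∧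
        OKN = OpenOK (Nt + (ℓ + 2)) ℓ c₁ cN ∧ OKt = OpenOK Nt ℓ c₁ cN) :
    ∀ (ψ' : AState Nt OKt) (φ : AState (Nt + (ℓ + 2)) OKN),
      Gop ℓ Nt OKN OKt ψ' = Qop (Nt + (ℓ + 2)) OKN (S1 (Nt + (ℓ + 2)) ℓ) φ →
      ψ' = 0 ∧ Qop (Nt + (ℓ + 2)) OKN (S1 (Nt + (ℓ + 2)) ℓ) φ = 0 :=
  G_image_not_Q1_coboundary_general ℓ Nt hNt OKN OKt hBC

end
end

section
/- Let ℓ ≥ 1 and N > 2ℓ+2, with periodic boundary conditions or special boundary conditions s = (c₁, c_N), and Ñ = N − (ℓ+2). Let σ' be a configuration of Ñ sites all of whose clusters have length at most ℓ, whose first site belongs to a cluster of length k and whose last site belongs to a cluster of length m, and suppose that k + m > ℓ in the periodic case, or that k > c₁ and m = c_N in the special case. Let τ be the N-site configuration whose first ℓ+2 sites form χ = 0 1…1 0 and whose last Ñ sites form σ'. Then there exists φ ∈ V_N such that e_τ = Q₁ φ; i.e., e_τ is a Q₁-coboundary. -/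
attribute [local instance 10] Classical.propDecidable

noncomputable section

/-!
Empty the occupied site `i₀` of `χ = 0 1…1 0` to get `μ`. In `S₁` the empty sites of `μ` are
`i₀` and the two ends of `χ`, so `Q₁ e_μ = ± e_{χσ'}` as soon as `i₀` is placed such that
occupying either end of `χ` creates a forbidden cluster. With periodic boundary conditions take
`m - 1` occupied sites between `i₀` and the right end: filling that end gives a cluster of length
`m + k > ℓ`, filling the left end one of length `(ℓ - m) + 1 + m` through the last `m` sites of
`σ'`. With special boundary conditions take `c₁` occupied sites between the left end and `i₀`:
filling the left end gives a boundary cluster of length `c₁ + 1`, filling the right end one of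
length `ℓ - c₁ + k > ℓ`.
-/

open Function

def RunsAtMost {N : ℕ} (ℓ : ℕ) (σ : Config N) : Prop :=
  ∀ a : ℕ, ¬ ∀ t ≤ ℓ, extc σ (a + t) = true

section Extension

variable {N : ℕ}

lemma apply_eq_extc (σ : Config N) (i : Fin N) : σ i = extc σ i := by
  rw [extc, dif_pos i.isLt]

lemma extc_update (σ : Config N) (i : Fin N) (b : Bool) (t : ℕ) :
    extc (update σ i b) t = if t = i then b else extc σ t := by
  by_cases ht : t < N
  · simp only [extc, dif_pos ht, update_apply, Fin.ext_iff]
  · simp only [extc, dif_neg ht]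
    split_ifs with h
    · exact absurd (h ▸ i.isLt) ht
    · rfl

lemma extc_mono {σ τ : Config N} (h : σ ≤ τ) {t : ℕ} (ht : extc σ t = true) :
    extc τ t = true := by
  unfold extc at ht ⊢
  split_ifs at ht ⊢ with hN
  exact Bool.le_iff_imp.mp (h _) ht

lemma cyc_apply_of_lt (σ : Config N) (i : Fin N) {t : ℕ} (h : i + t < N) :
    σ (cyc i t) = extc σ (i + t) := by
  rw [apply_eq_extc σ]
  exact congrArg (extc σ) (Nat.mod_eq_of_lt h)

lemma cyc_apply_of_le (σ : Config N) (i : Fin N) {t : ℕ} (h : N ≤ i + t) (h' : i + t < 2 * N) :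
    σ (cyc i t) = extc σ (i + t - N) := by
  rw [apply_eq_extc σ]
  exact congrArg (extc σ) ((Nat.mod_eq_sub_mod h).trans (Nat.mod_eq_of_lt (by omega)))

end Extension

section Allowed

variable {N ℓ : ℕ} {σ τ : Config N}

lemma RunsAtMost.anti (h : σ ≤ τ) (hτ : RunsAtMost ℓ τ) : RunsAtMost ℓ σ :=
  fun a ha => hτ a fun t ht => extc_mono h (ha t ht)

lemma antitone_openOK (c₁ cN : ℕ) : Antitone (OpenOK N ℓ c₁ cN) := fun _ _ h hτ =>
  ⟨RunsAtMost.anti h hτ.1, fun hx => hτ.2.1 ⟨hx.1, fun t ht => extc_mono h (hx.2 t ht)⟩,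
    fun hx => hτ.2.2 ⟨hx.1, fun t ht => extc_mono h (hx.2 t ht)⟩⟩

lemma antitone_perOK : Antitone (PerOK N ℓ) := by
  intro σ τ h hτ i
  obtain ⟨t, ht, hf⟩ := hτ i
  exact ⟨t, ht, Bool.eq_false_iff.mpr fun hσ => by simp [Bool.le_iff_imp.mp (h _) hσ] at hf⟩

lemma RunsAtMost.le_of_prefix {k : ℕ} (hσ : RunsAtMost ℓ σ) (hk : ∀ t < k, extc σ t = true) :
    k ≤ ℓ := by
  by_contra! hℓk
  exact hσ 0 fun t ht => by simpa using hk t (by omega)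

lemma RunsAtMost.le_of_suffix {m : ℕ} (hℓN : ℓ < N) (hσ : RunsAtMost ℓ σ)
    (hm : ∀ t < m, extc σ (N - 1 - t) = true) : m ≤ ℓ := by
  by_contra! hℓm
  refine hσ (N - 1 - ℓ) fun t ht => ?_
  rw [show N - 1 - ℓ + t = N - 1 - (ℓ - t) by omega]
  exact hm _ (by omega)

lemma perOK_of_runsAtMost (h0 : extc σ 0 = false) (hσ : RunsAtMost ℓ σ) :
    PerOK N ℓ σ := by
  intro i
  by_cases hi : i + ℓ < N
  · obtain ⟨t, ht, hf⟩ : ∃ t ≤ ℓ, extc σ (i + t) = false := by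
      simpa using hσ i
    exact ⟨t, ht, by rwa [cyc_apply_of_lt σ i (by omega)]⟩
  · refine ⟨N - i, by omega, ?_⟩
    rwa [cyc_apply_of_le σ i (by omega) (by omega), show (i : ℕ) + (N - i) - N = 0 by omega]

lemma not_perOK_of_run (a : ℕ) (ha : a + ℓ < N) (h : ∀ t ≤ ℓ, extc σ (a + t) = true) :
    ¬ PerOK N ℓ σ := by
  intro hσ
  obtain ⟨t, ht, hf⟩ := hσ ⟨a, by omega⟩
  rw [cyc_apply_of_lt σ _ (by simp only; omega), h t ht] at hf
  exact Bool.noConfusion hf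

lemma not_perOK_of_suffix_prefix {m : ℕ} (hℓN : ℓ < N) (hm : 0 < m) (hmN : m ≤ N)
    (hsuf : ∀ t < m, extc σ (N - 1 - t) = true) (hpre : ∀ t < ℓ + 1 - m, extc σ t = true) :
    ¬ PerOK N ℓ σ := by
  intro hσ
  obtain ⟨t, ht, hf⟩ := hσ ⟨N - m, by omega⟩
  by_cases htm : t < m
  · rw [cyc_apply_of_lt σ _ (by simp only; omega), show N - m + t = N - 1 - (m - 1 - t) by omega,
      hsuf _ (by omega)] at hf
    exact Bool.noConfusion hf
  · rw [cyc_apply_of_le σ _ (by simp only; omega) (by simp only; omega),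
      show N - m + t - N = t - m by omega, hpre _ (by omega)] at hf
    exact Bool.noConfusion hf

end Allowed

section Supercharge

variable {N : ℕ} {OK : Config N → Prop} {S : Fin N → Prop}

lemma Qop_single_of_unique_filling {μ : Config N} (hμ : OK μ) {i₀ : Fin N} (hS : S i₀)
    (hμi₀ : μ i₀ = false) (hfill : OK (update μ i₀ true))
    (hblock : ∀ i ≠ i₀, S i → μ i = false → ¬ OK (update μ i true)) :
    Qop N OK S (Pi.single ⟨μ, hμ⟩ 1) = sgn μ i₀ • Pi.single ⟨update μ i₀ true, hfill⟩ 1 := by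
  ext τ
  rw [Qop, QopA, Matrix.mulVecLin_apply, Matrix.mulVec_single_one, Matrix.col_apply, QmatA,
    Finset.sum_eq_single i₀]
  · by_cases hτ : τ = ⟨update μ i₀ true, hfill⟩
    · subst hτ
      simp [hS, hμi₀]
    · rw [if_neg, Pi.smul_apply, Pi.single_eq_of_ne hτ, smul_zero]
      exact fun h => hτ (Subtype.ext h.2.2)
  · rintro i - hi
    rw [if_neg]
    rintro ⟨hSi, hμi, hτi⟩
    exact hblock i hi hSi hμi (hτi ▸ τ.2)
  · simp

lemma exists_Qop_eq_single {τ : Config N} (hτ : OK τ) {i₀ : Fin N} (hS : S i₀)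
    (hτi₀ : τ i₀ = true) (hμ : OK (update τ i₀ false))
    (hblock : ∀ i ≠ i₀, S i → τ i = false → ¬ OK (update (update τ i₀ false) i true)) :
    ∃ φ : AState N OK, Pi.single ⟨τ, hτ⟩ 1 = Qop N OK S φ := by
  have hrefill : update (update τ i₀ false) i₀ true = τ := by
    rw [update_idem, ← hτi₀, update_eq_self]
  have hsgn : sgn (update τ i₀ false) i₀ ≠ 0 := pow_ne_zero _ (by norm_num)
  have hQ := Qop_single_of_unique_filling (S := S) hμ hS (update_self ..) (by rwa [hrefill])
    fun i hi hSi hτi => hblock i hi hSi (by rwa [update_of_ne hi] at hτi)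
  refine ⟨(sgn (update τ i₀ false) i₀)⁻¹ • Pi.single ⟨_, hμ⟩ 1, ?_⟩
  rw [map_smul, hQ, smul_smul, inv_mul_cancel₀ hsgn, one_smul]
  simp_rw [hrefill]

end Supercharge

section Glue

variable {ℓ Nt : ℕ} {σ : Config Nt}

lemma extc_glue (t : ℕ) :
    extc (glue ℓ Nt σ) t =
      if t < ℓ + 2 then decide (1 ≤ t ∧ t ≤ ℓ) else extc σ (t - (ℓ + 2)) := by
  by_cases hN : t < Nt + (ℓ + 2)
  · by_cases ht : t < ℓ + 2
    · simp [extc, hN, ht, glue]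
    · simp [extc, hN, ht, glue, show t - (ℓ + 2) < Nt by omega]
  · simp [extc, hN, show ¬ t < ℓ + 2 by omega, show ¬ t - (ℓ + 2) < Nt by omega]

lemma RunsAtMost.glue (hσ : RunsAtMost ℓ σ) : RunsAtMost ℓ (glue ℓ Nt σ) := by
  intro a hrun
  by_cases ha : a < ℓ + 2
  · obtain ⟨t, ht, hχ⟩ : ∃ t ≤ ℓ, a + t = 0 ∨ a + t = ℓ + 1 := by
      rcases Nat.eq_zero_or_pos a with h | h
      exacts [⟨0, by omega, by omega⟩, ⟨ℓ + 1 - a, by omega, by omega⟩]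
    have hocc := hrun t ht
    rw [extc_glue, if_pos (by omega)] at hocc
    simp only [decide_eq_true_eq] at hocc
    omega
  · refine hσ (a - (ℓ + 2)) fun t ht => ?_
    rw [← hrun t ht, extc_glue, if_neg (by omega), show a + t - (ℓ + 2) = a - (ℓ + 2) + t by omega]

lemma glue_apply_eq_true {i : Fin (Nt + (ℓ + 2))} (h1 : 1 ≤ (i : ℕ)) (hℓ : (i : ℕ) ≤ ℓ) :
    glue ℓ Nt σ i = true := by
  simp [glue, show (i : ℕ) < ℓ + 2 by omega, h1, hℓ]

lemma glue_eq_false_of_lt {i : Fin (Nt + (ℓ + 2))} (hi : (i : ℕ) < ℓ + 2)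
    (h : glue ℓ Nt σ i = false) : (i : ℕ) = 0 ∨ (i : ℕ) = ℓ + 1 := by
  simp only [glue, dif_pos hi, decide_eq_false_iff_not] at h
  omega

variable (i₀ : Fin (Nt + (ℓ + 2)))

lemma exists_Qop_S1_eq_single_glue {OK : Config (Nt + (ℓ + 2)) → Prop} (hOK : OK (glue ℓ Nt σ))
    (hanti : Antitone OK) (h1 : 1 ≤ (i₀ : ℕ)) (hℓ : (i₀ : ℕ) ≤ ℓ)
    (hleft : ¬ OK (update (update (glue ℓ Nt σ) i₀ false) ⟨0, by omega⟩ true))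
    (hright : ¬ OK (update (update (glue ℓ Nt σ) i₀ false) ⟨ℓ + 1, by omega⟩ true)) :
    ∃ φ : AState (Nt + (ℓ + 2)) OK,
      Pi.single ⟨glue ℓ Nt σ, hOK⟩ 1 = Qop (Nt + (ℓ + 2)) OK (S1 (Nt + (ℓ + 2)) ℓ) φ := by
  refine exists_Qop_eq_single hOK (show (i₀ : ℕ) < ℓ + 2 by omega) (glue_apply_eq_true h1 hℓ)
    (hanti (update_le_iff.mpr ⟨Bool.false_le _, fun _ _ => le_rfl⟩) hOK) fun i _ hS hi => ?_
  rcases glue_eq_false_of_lt hS hi with h | h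
  · rwa [show i = ⟨0, by omega⟩ from Fin.ext h]
  · rwa [show i = ⟨ℓ + 1, by omega⟩ from Fin.ext h]

lemma extc_fill_first_of_lt (hℓ : (i₀ : ℕ) ≤ ℓ) {t : ℕ} (ht : t < i₀) :
    extc (update (update (glue ℓ Nt σ) i₀ false) ⟨0, by omega⟩ true) t = true := by
  simp only [extc_update, extc_glue]
  split_ifs with h₀ hi hχ
  · rfl
  · omega
  · exact decide_eq_true ⟨by omega, by omega⟩
  · omega

lemma extc_fill_first_tail (hℓ : (i₀ : ℕ) ≤ ℓ) {t : ℕ} (ht : t < Nt) :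
    extc (update (update (glue ℓ Nt σ) i₀ false) ⟨0, by omega⟩ true) (Nt + (ℓ + 2) - 1 - t) =
      extc σ (Nt - 1 - t) := by
  rw [extc_update, extc_update, extc_glue, if_neg (by simp only; omega), if_neg (by omega),
    if_neg (by omega), show Nt + (ℓ + 2) - 1 - t - (ℓ + 2) = Nt - 1 - t by omega]

lemma extc_fill_last_run {k : ℕ} (hk : ∀ t < k, extc σ t = true) (hi₀k : (i₀ : ℕ) ≤ k)
    {t : ℕ} (ht : t ≤ ℓ) :
    extc (update (update (glue ℓ Nt σ) i₀ false) ⟨ℓ + 1, by omega⟩ true) (i₀ + 1 + t) = true := by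
  simp only [extc_update, extc_glue]
  split_ifs with hL h₀ hχ
  · rfl
  · omega
  · exact decide_eq_true ⟨by omega, by omega⟩
  · exact hk _ (by omega)

end Glue

section Boundary

variable {ℓ Nt : ℕ} {σ : Config Nt} {k : ℕ}

lemma exists_Qop_per_eq_single_glue (hNt : ℓ < Nt) (hσ : RunsAtMost ℓ σ) {m : ℕ}
    (hk : ∀ t < k, extc σ t = true) (hm : ∀ t < m, extc σ (Nt - 1 - t) = true)
    (hkm : ℓ < k + m) :
    ∃ (hok : PerOK (Nt + (ℓ + 2)) ℓ (glue ℓ Nt σ))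
      (φ : AState (Nt + (ℓ + 2)) (PerOK (Nt + (ℓ + 2)) ℓ)),
      Pi.single ⟨glue ℓ Nt σ, hok⟩ 1 =
        Qop (Nt + (ℓ + 2)) (PerOK (Nt + (ℓ + 2)) ℓ) (S1 (Nt + (ℓ + 2)) ℓ) φ := by
  have hkℓ := hσ.le_of_prefix hk
  have hmℓ := hσ.le_of_suffix hNt hm
  have hglue : PerOK (Nt + (ℓ + 2)) ℓ (glue ℓ Nt σ) :=
    perOK_of_runsAtMost (by simp [extc_glue]) hσ.glue
  let i₀ : Fin (Nt + (ℓ + 2)) := ⟨ℓ + 1 - m, by omega⟩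
  have hi₀ : (i₀ : ℕ) = ℓ + 1 - m := rfl
  refine ⟨hglue, exists_Qop_S1_eq_single_glue i₀ hglue antitone_perOK (by omega) (by omega) ?_ ?_⟩
  · refine not_perOK_of_suffix_prefix (m := m) (by omega) (by omega) (by omega) (fun t ht => ?_)
      fun t ht => extc_fill_first_of_lt i₀ (by omega) (by omega)
    rw [extc_fill_first_tail i₀ (by omega) (by omega)]
    exact hm t ht
  · exact not_perOK_of_run (i₀ + 1) (by omega) fun t ht => extc_fill_last_run i₀ hk (by omega) ht

lemma openOK_glue (c₁ : ℕ) {cN : ℕ} (hσ : RunsAtMost ℓ σ) (hcN : cN < Nt)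
    (hend : extc σ (Nt - 1 - cN) = false) : OpenOK (Nt + (ℓ + 2)) ℓ c₁ cN (glue ℓ Nt σ) := by
  refine ⟨hσ.glue, fun ⟨_, hleft⟩ => ?_, fun ⟨_, hright⟩ => ?_⟩
  · simpa [extc_glue] using hleft 0 (Nat.zero_le _)
  · have hocc := hright cN le_rfl
    rw [extc_glue, if_neg (by omega), show Nt + (ℓ + 2) - 1 - cN - (ℓ + 2) = Nt - 1 - cN by omega,
      hend] at hocc
    exact Bool.noConfusion hocc

lemma exists_Qop_open_eq_single_glue (hσ : RunsAtMost ℓ σ) {c₁ cN : ℕ}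
    (hk : ∀ t < k, extc σ t = true) (hc₁k : c₁ < k) (hcN : cN < Nt)
    (hend : extc σ (Nt - 1 - cN) = false) :
    ∃ (hok : OpenOK (Nt + (ℓ + 2)) ℓ c₁ cN (glue ℓ Nt σ))
      (φ : AState (Nt + (ℓ + 2)) (OpenOK (Nt + (ℓ + 2)) ℓ c₁ cN)),
      Pi.single ⟨glue ℓ Nt σ, hok⟩ 1 =
        Qop (Nt + (ℓ + 2)) (OpenOK (Nt + (ℓ + 2)) ℓ c₁ cN) (S1 (Nt + (ℓ + 2)) ℓ) φ := by
  have hkℓ := hσ.le_of_prefix hk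
  have hglue := openOK_glue c₁ hσ hcN hend
  let i₀ : Fin (Nt + (ℓ + 2)) := ⟨c₁ + 1, by omega⟩
  have hi₀ : (i₀ : ℕ) = c₁ + 1 := rfl
  refine ⟨hglue, exists_Qop_S1_eq_single_glue i₀ hglue (antitone_openOK c₁ cN) (by omega)
    (by omega) ?_ ?_⟩
  · exact fun h => h.2.1 ⟨by omega, fun t ht => extc_fill_first_of_lt i₀ (by omega) (by omega)⟩
  · exact fun h => h.1 (i₀ + 1) fun t ht => extc_fill_last_run i₀ hk (by omega) ht

end Boundary

theorem chi_glue_is_Q1_coboundary_general (ℓ Nt : ℕ) (hNt : ℓ < Nt)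
    (σ' : Config Nt)
    (hclus : ∀ a : ℕ, ¬ ∀ t ≤ ℓ, extc σ' (a + t) = true)
    (k m : ℕ)
    (hk1 : ∀ t < k, extc σ' t = true)
    (hm1 : ∀ t < m, extc σ' (Nt - 1 - t) = true)
    (hm2 : m = Nt ∨ extc σ' (Nt - 1 - m) = false) :
    (ℓ < k + m →
      ∃ (hok : PerOK (Nt + (ℓ + 2)) ℓ (glue ℓ Nt σ'))
        (φ : AState (Nt + (ℓ + 2)) (PerOK (Nt + (ℓ + 2)) ℓ)),
        Pi.single
            (⟨glue ℓ Nt σ', hok⟩ : {σ : Config (Nt + (ℓ + 2)) // PerOK (Nt + (ℓ + 2)) ℓ σ})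
            (1 : ℂ) =
          Qop (Nt + (ℓ + 2)) (PerOK (Nt + (ℓ + 2)) ℓ) (S1 (Nt + (ℓ + 2)) ℓ) φ) ∧
    (∀ c₁ cN, c₁ ≤ ℓ → cN ≤ ℓ → c₁ < k → m = cN →
      ∃ (hok : OpenOK (Nt + (ℓ + 2)) ℓ c₁ cN (glue ℓ Nt σ'))
        (φ : AState (Nt + (ℓ + 2)) (OpenOK (Nt + (ℓ + 2)) ℓ c₁ cN)),
        Pi.single
            (⟨glue ℓ Nt σ', hok⟩ :
              {σ : Config (Nt + (ℓ + 2)) // OpenOK (Nt + (ℓ + 2)) ℓ c₁ cN σ})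
            (1 : ℂ) =
          Qop (Nt + (ℓ + 2)) (OpenOK (Nt + (ℓ + 2)) ℓ c₁ cN) (S1 (Nt + (ℓ + 2)) ℓ) φ) := by
  have hσ' : RunsAtMost ℓ σ' := hclus
  have hmℓ := hσ'.le_of_suffix hNt hm1
  have hend : extc σ' (Nt - 1 - m) = false := hm2.resolve_left (by omega)
  refine ⟨exists_Qop_per_eq_single_glue hNt hσ' hk1 hm1, ?_⟩
  rintro c₁ cN - - hc₁k rfl
  exact exists_Qop_open_eq_single_glue hσ' hk1 hc₁k (by omega) hend

/-- Let `σ'` be a configuration of `Ñ` sites (with `N = Ñ + (ℓ+2) > 2ℓ+2`) all of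
whose clusters have length at most `ℓ`, whose first site belongs to a cluster of
length `k` and whose last site belongs to a cluster of length `m`. If `k + m > ℓ`
(periodic case), respectively `k > c₁` and `m = cN` (special case), then the basis
state `e_{χσ'}` of `V_N` is a `Q₁`-coboundary. -/
theorem chi_glue_is_Q1_coboundary (ℓ Nt : ℕ) (hℓ : 1 ≤ ℓ) (hNt : ℓ < Nt)
    (σ' : Config Nt)
    (hclus : ∀ a : ℕ, ¬ ∀ t ≤ ℓ, extc σ' (a + t) = true)
    (k m : ℕ) (hkN : k ≤ Nt) (hmN : m ≤ Nt)
    (hk1 : ∀ t < k, extc σ' t = true) (hk2 : extc σ' k = false)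
    (hm1 : ∀ t < m, extc σ' (Nt - 1 - t) = true)
    (hm2 : m = Nt ∨ extc σ' (Nt - 1 - m) = false) :
    (ℓ < k + m →
      ∃ (hok : PerOK (Nt + (ℓ + 2)) ℓ (glue ℓ Nt σ'))
        (φ : AState (Nt + (ℓ + 2)) (PerOK (Nt + (ℓ + 2)) ℓ)),
        Pi.single
            (⟨glue ℓ Nt σ', hok⟩ : {σ : Config (Nt + (ℓ + 2)) // PerOK (Nt + (ℓ + 2)) ℓ σ})
            (1 : ℂ) =
          Qop (Nt + (ℓ + 2)) (PerOK (Nt + (ℓ + 2)) ℓ) (S1 (Nt + (ℓ + 2)) ℓ) φ) ∧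
    (∀ c₁ cN, c₁ ≤ ℓ → cN ≤ ℓ → c₁ < k → m = cN →
      ∃ (hok : OpenOK (Nt + (ℓ + 2)) ℓ c₁ cN (glue ℓ Nt σ'))
        (φ : AState (Nt + (ℓ + 2)) (OpenOK (Nt + (ℓ + 2)) ℓ c₁ cN)),
        Pi.single
            (⟨glue ℓ Nt σ', hok⟩ :
              {σ : Config (Nt + (ℓ + 2)) // OpenOK (Nt + (ℓ + 2)) ℓ c₁ cN σ})
            (1 : ℂ) =
          Qop (Nt + (ℓ + 2)) (OpenOK (Nt + (ℓ + 2)) ℓ c₁ cN) (S1 (Nt + (ℓ + 2)) ℓ) φ) :=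
  chi_glue_is_Q1_coboundary_general ℓ Nt hNt σ' hclus k m hk1 hm1 hm2
end
end
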